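/- Suppose ∑_{j∈J} a_j x_j ≥ α is a valid inequality for circuits on values v_1 < ... < v_n, |J| ≤ n − 4, and it holds at equality for at least one circuit. If ∑_{j=1}^n d_j x_j = δ is satisfied by every circuit that satisfies the inequality at equality, then d_i = d_j for all i, j ∉ J. -/

import Mathlib

/-- A circuit on `{1,...,n}`: a permutation of `Fin n` that is a single `n`-cycle. -/
def IsCircuitPerm {n : ℕ} (σ : Equiv.Perm (Fin n)) : Prop :=
  σ.IsCycle ∧ σ.support = Finset.univ

/-- A circuit point on values `v`: `x i = v (σ i)` for some single-`n`-cycle permutation `σ`. -/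
def IsCircuitPt {n : ℕ} (v : Fin n → ℝ) (x : Fin n → ℝ) : Prop :=
  ∃ σ : Equiv.Perm (Fin n), IsCircuitPerm σ ∧ ∀ i, x i = v (σ i)

/-!
Write a circuit as the tour `l` of its cycle, so that `x i = v (l.formPerm i)`. Choose four points
outside `J`, among them `i` and `j`, and cut the rotated tour into four blocks ending at these
points. Reordering the blocks gives a new tour that differs from the old one only in the successors
of the four block ends; since these lie outside `J`, every reordered tour is again tight, so the
linear form `∑ d_i x_i` takes the same value on all of them. The difference between two such values
only involves the coefficients `d` at the block ends and the values `v` at the block heads, and the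
six cyclic orders of four blocks give enough linear relations to force these four coefficients to
be equal.
-/

open Equiv Function

namespace List

variable {α M : Type*}

section Sums

variable [AddCommMonoid M] (f : α → α → M)

def pathSum : List α → M
  | x :: y :: l => f x y + pathSum (y :: l)
  | _ => 0

def cycleSum (l : List α) : M :=
  pathSum f (l ++ l.take 1)

theorem pathSum_cons (x : α) (l : List α) : pathSum f (x :: l) = (zipWith f (x :: l) l).sum := by
  induction l generalizing x with
  | nil => rfl
  | cons y l ih => rw [pathSum, ih, zipWith_cons_cons, sum_cons]

theorem cycleSum_eq_sum_zipWith_rotate (l : List α) :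
    cycleSum f l = (zipWith f l (l.rotate 1)).sum := by
  cases l with
  | nil => rfl
  | cons x l =>
    have hlen : (x :: l).length = (l ++ [x]).length := by simp
    rw [cycleSum, rotate_cons_succ, rotate_zero, take_succ_cons, take_zero, cons_append,
      pathSum_cons, ← cons_append, ← append_nil (l ++ [x]), zipWith_append hlen]
    simp

theorem pathSum_append {p h : α} :
    ∀ {l₁ l₂ : List α}, l₁.getLast? = some p → l₂.head? = some h →
      pathSum f (l₁ ++ l₂) = pathSum f l₁ + f p h + pathSum f l₂
  | [x], h' :: l₂, hp, hh => by
    simp only [getLast?_singleton, Option.some.injEq, head?_cons] at hp hh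
    subst hp hh
    simp [pathSum]
  | x :: y :: l₁, l₂, hp, hh => by
    rw [cons_append, cons_append, pathSum, ← cons_append, pathSum_append (l₁ := y :: l₁) _ hh,
      pathSum]
    · abel
    · simpa using hp
  | [], _, hp, _ => by simp at hp
  | [_], [], _, hh => by simp at hh

theorem flatten_ofFn_four (B : Fin 4 → List α) : (ofFn B).flatten = B 0 ++ B 1 ++ B 2 ++ B 3 := by
  simp [ofFn_succ]

theorem cycleSum_flatten_ofFn_four {B : Fin 4 → List α} {h p : Fin 4 → α}
    (hh : ∀ i, (B i).head? = some (h i)) (hp : ∀ i, (B i).getLast? = some (p i)) :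
    cycleSum f (ofFn B).flatten = ∑ i, pathSum f (B i) + ∑ i, f (p i) (h (i + 1)) := by
  have htake : (B 0 ++ B 1 ++ B 2 ++ B 3).take 1 = [h 0] := by
    obtain ⟨t, ht⟩ : ∃ t, B 0 = h 0 :: t := by
      cases h0 : B 0 with
      | nil => simpa [h0] using hh 0
      | cons x t => exact ⟨t, by simpa [h0] using hh 0⟩
    simp [ht]
  rw [flatten_ofFn_four, cycleSum, htake, append_assoc, append_assoc, append_assoc,
    pathSum_append f (hp 0) (by simp [hh 1] : _ = some (h 1)),
    pathSum_append f (hp 1) (by simp [hh 2] : _ = some (h 2)),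
    pathSum_append f (hp 2) (by simp [hh 3] : _ = some (h 3)), pathSum_append f (hp 3) rfl]
  simp only [Fin.sum_univ_four, pathSum, Fin.isValue, Fin.reduceAdd]
  abel

end Sums

theorem map_formPerm [DecidableEq α] {l : List α} (hl : l.Nodup) :
    l.map l.formPerm = l.rotate 1 :=
  ext_getElem (by simp) fun i _ _ => by simp [formPerm_apply_getElem _ hl, getElem_rotate]

theorem sum_formPerm [AddCommMonoid M] [Fintype α] [DecidableEq α] (f : α → α → M) {l : List α}
    (hl : l.Nodup) (hall : ∀ x, x ∈ l) : ∑ x, f x (l.formPerm x) = cycleSum f l := by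
  have huniv : (Finset.univ : Finset α) = l.toFinset := by ext; simp [hall]
  rw [huniv, sum_toFinset _ hl, cycleSum_eq_sum_zipWith_rotate, ← map_formPerm hl,
    zipWith_map_right, zipWith_self]

theorem Sublist.exists_append_getLast? {a : α} {l L : List α} (h : a :: l <+ L) :
    ∃ B R, L = B ++ R ∧ B.getLast? = some a ∧ l <+ R := by
  obtain ⟨r₁, r₂, rfl, ha, hl⟩ := cons_sublist_iff.mp h
  obtain ⟨s, t, rfl⟩ := append_of_mem ha
  exact ⟨s ++ [a], t ++ r₂, by simp, by simp, hl.trans (sublist_append_right t r₂)⟩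

theorem Sublist.exists_isRotated_flatten_ofFn_four {p : Fin 4 → α} {L : List α}
    (h : ofFn p <+ L) :
    ∃ B : Fin 4 → List α, (ofFn B).flatten ~r L ∧ ∀ i, (B i).getLast? = some (p i) := by
  simp only [ofFn_succ, Fin.succ_zero_eq_one, Fin.succ_one_eq_two, ofFn_zero] at h
  obtain ⟨l₁, R₁, rfl, hp₁, h₁⟩ := h.exists_append_getLast?
  obtain ⟨l₂, R₂, rfl, hp₂, h₂⟩ := h₁.exists_append_getLast?
  obtain ⟨l₃, R₃, rfl, hp₃, h₃⟩ := h₂.exists_append_getLast?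
  obtain ⟨l₄, E, rfl, hp₄, -⟩ := h₃.exists_append_getLast?
  refine ⟨![E ++ l₁, l₂, l₃, l₄], ?_, ?_⟩
  · simpa [flatten_ofFn_four] using
      (isRotated_append (l := l₁ ++ (l₂ ++ (l₃ ++ l₄))) (l' := E)).symm
  · intro i
    fin_cases i <;> simp_all

theorem Nodup.exists_ofFn_sublist [DecidableEq α] {l : List α} (hl : l.Nodup)
    {T : Finset α} (hT : ∀ x ∈ T, x ∈ l) {k : ℕ} (hk : T.card = k) :
    ∃ p : Fin k → α, ofFn p <+ l ∧ ∀ x, x ∈ T ↔ ∃ i, p i = x := by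
  set F := l.filter (· ∈ T)
  have hFT : F.toFinset = T := by ext x; simpa [F] using fun hx => hT x hx
  have hF : F.length = k := by rw [← toFinset_card_of_nodup (hl.filter _), hFT, hk]
  have hpF : ofFn (fun i : Fin k => F[i.val]) = F := ext_getElem (by simp [hF]) (by simp)
  refine ⟨fun i => F[i.val], by rw [hpF]; exact filter_sublist, fun x => ?_⟩
  rw [← mem_ofFn, hpF, ← mem_toFinset, hFT]

theorem injective_of_mem_of_nodup_flatten_ofFn {k : ℕ} {B : Fin k → List α}
    (hB : (ofFn B).flatten.Nodup) {h : Fin k → α} (hh : ∀ i, h i ∈ B i) : Injective h := by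
  intro i j hij
  by_contra hne
  have hdisj := pairwise_ofFn.mp (nodup_flatten.mp hB).2
  rcases lt_or_gt_of_ne hne with hlt | hlt
  · exact hdisj hlt (hh i) (hij ▸ hh j)
  · exact hdisj hlt (hij ▸ hh j) (hh i)

end List

theorem eq_of_forall_perm_sum_mul_eq {K : Type*} [Field K] [CharZero K] {d y : Fin 4 → K}
    (hy : Injective y)
    (h : ∀ π : Perm (Fin 4), ∑ i, d (π i) * y (π (i + 1)) = ∑ i, d i * y (i + 1)) :
    ∀ i, d i = d 0 := by
  have e₁ := h (swap 2 3)
  have e₂ := h (swap 1 2)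
  have e₃ := h (swap 1 2 * swap 2 3)
  have e₄ := h (swap 2 3 * swap 1 2)
  have e₅ := h (swap 1 3)
  simp only [Fin.sum_univ_four, Perm.mul_apply, swap_apply_def, Fin.isValue, Fin.reduceAdd,
    Fin.reduceEq, if_true, if_false] at e₁ e₂ e₃ e₄ e₅
  have cancel : ∀ {a b : K} {i j : Fin 4}, i ≠ j → (a - b) * (y i - y j) = 0 → a = b :=
    fun hij hab => sub_eq_zero.mp ((mul_eq_zero.mp hab).resolve_right
      (sub_ne_zero.mpr (hy.ne hij)))
  have h13 : d 1 = d 3 :=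
    cancel (i := 0) (j := 2) (by decide) (by linear_combination (e₁ + e₅ - e₂ - e₄ + e₃) / 2)
  have h02 : d 0 = d 2 :=
    cancel (i := 3) (j := 1) (by decide) (by linear_combination (e₂ + e₄ - e₁ - e₃ + e₅) / 2)
  have h01 : d 0 = d 1 :=
    cancel (i := 0) (j := 3) (by decide)
      (by linear_combination e₁ + (y 0 - y 3) * h02 + (y 2 - y 0) * h13)
  intro i
  fin_cases i
  exacts [rfl, h01.symm, h02.symm, (h01.trans h13).symm]

theorem isCircuitPerm_formPerm {n : ℕ} (hn : 2 ≤ n) {l : List (Fin n)} (hl : l.Nodup)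
    (hall : ∀ x, x ∈ l) : IsCircuitPerm l.formPerm := by
  have huniv : l.toFinset = Finset.univ := Finset.eq_univ_iff_forall.mpr (by simpa using hall)
  have hlen : l.length = n := by
    rw [← List.toFinset_card_of_nodup hl, huniv, Finset.card_univ, Fintype.card_fin]
  refine ⟨List.isCycle_formPerm hl (hlen.symm ▸ hn), ?_⟩
  rw [List.support_formPerm_of_nodup l hl fun x hx => by simp [hx] at hlen; omega, huniv]

theorem IsCircuitPerm.exists_formPerm_eq {n : ℕ} {σ : Perm (Fin n)} (hσ : IsCircuitPerm σ) :
    ∃ l : List (Fin n), l.Nodup ∧ (∀ x, x ∈ l) ∧ l.formPerm = σ := by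
  obtain ⟨x, hx, -⟩ := hσ.1
  refine ⟨σ.toList x, σ.nodup_toList x, fun y => ?_,
    by rw [Perm.formPerm_toList, hσ.1.cycleOf_eq hx]⟩
  have hy : σ y ≠ y := Perm.mem_support.mp (hσ.2 ▸ Finset.mem_univ y)
  exact Perm.mem_toList_iff.mpr ⟨hσ.1.sameCycle hx hy, Perm.mem_support.mpr hx⟩

section Tight

variable {n : ℕ} {v : Fin n → ℝ} {J : Finset (Fin n)} {a d : Fin n → ℝ} {α δ : ℝ}

theorem sum_mul_formPerm_eq_cycleSum {l : List (Fin n)} (hl : l.Nodup) (hall : ∀ x, x ∈ l) :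
    ∑ j ∈ J, a j * v (l.formPerm j) = l.cycleSum fun x y => if x ∈ J then a x * v y else 0 := by
  rw [← List.sum_formPerm _ hl hall, Finset.sum_ite_mem, Finset.univ_inter]

theorem coeff_eq_of_tight_blocks (hn : 2 ≤ n) (hv : Injective v)
    (hd : ∀ x : Fin n → ℝ, IsCircuitPt v x → ∑ j ∈ J, a j * x j = α → ∑ i, d i * x i = δ)
    {B : Fin 4 → List (Fin n)} {p : Fin 4 → Fin n} (hB : (List.ofFn B).flatten.Nodup)
    (hall : ∀ x, x ∈ (List.ofFn B).flatten) (hBp : ∀ i, (B i).getLast? = some (p i))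
    (hpJ : ∀ i, p i ∉ J) (htight : ∑ j ∈ J, a j * v ((List.ofFn B).flatten.formPerm j) = α) :
    ∀ i, d (p i) = d (p 0) := by
  have hhead : ∀ i, ∃ x, (B i).head? = some x := fun i =>
    Option.ne_none_iff_exists'.mp fun hnone => by
      simpa [List.head?_eq_none_iff.mp hnone] using hBp i
  choose h hBh using hhead
  have hinj : Injective (v ∘ h) :=
    hv.comp <| List.injective_of_mem_of_nodup_flatten_ofFn hB fun i =>
      List.mem_of_mem_head? (hBh i)
  have expand : ∀ (f : Fin n → Fin n → ℝ) (π : Perm (Fin 4)),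
      (List.ofFn (B ∘ π)).flatten.cycleSum f =
        ∑ i, (B i).pathSum f + ∑ i, f (p (π i)) (h (π (i + 1))) := fun f π => by
    rw [List.cycleSum_flatten_ofFn_four f (B := B ∘ π) (h := h ∘ π) (p := p ∘ π)
      (fun i => hBh _) (fun i => hBp _)]
    exact congrArg (· + _) (Equiv.sum_comp π fun i => (B i).pathSum f)
  have tour_one : (List.ofFn (B ∘ ⇑(1 : Perm (Fin 4)))).flatten = (List.ofFn B).flatten := by
    simp
  have hsum : ∀ π : Perm (Fin 4),
      ∑ i, (B i).pathSum (fun x y => d x * v y) + ∑ i, d (p (π i)) * v (h (π (i + 1))) = δ := by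
    intro π
    have hperm := (Perm.ofFn_comp_perm π B).flatten
    have hπ := hperm.nodup_iff.mpr hB
    have hallπ : ∀ x, x ∈ (List.ofFn (B ∘ π)).flatten := fun x => hperm.mem_iff.mpr (hall x)
    rw [← expand, ← List.sum_formPerm _ hπ hallπ]
    refine hd _ ⟨_, isCircuitPerm_formPerm hn hπ hallπ, fun _ => rfl⟩ ?_
    rw [sum_mul_formPerm_eq_cycleSum hπ hallπ, expand, ← htight,
      sum_mul_formPerm_eq_cycleSum hB hall, ← tour_one, expand]
    -- the junction terms carry `J`-weight zero, as the block ends lie outside `J`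
    simp [hpJ]
  exact eq_of_forall_perm_sum_mul_eq (d := d ∘ p) hinj fun π =>
    add_left_cancel ((hsum π).trans (by simpa using (hsum 1).symm))

end Tight

theorem stmt_19 (n : ℕ) (hn : 5 ≤ n) (v : Fin n → ℝ) (hv : StrictMono v)
    (J : Finset (Fin n)) (hJ : J.card ≤ n - 4)
    (a : Fin n → ℝ) (α : ℝ)
    (x0 : Fin n → ℝ) (hx0 : IsCircuitPt v x0) (htight : ∑ j ∈ J, a j * x0 j = α)
    (d : Fin n → ℝ) (δ : ℝ)
    (hd : ∀ x : Fin n → ℝ, IsCircuitPt v x → ∑ j ∈ J, a j * x j = α →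
      ∑ i, d i * x i = δ) :
    ∀ i ∉ J, ∀ j ∉ J, d i = d j := by
  intro i hi j hj
  obtain ⟨σ, hσ, hx0σ⟩ := hx0
  obtain ⟨l, hl, hall, rfl⟩ := hσ.exists_formPerm_eq
  obtain ⟨T, hijT, hTJ, hT⟩ := Finset.exists_subsuperset_card_eq (s := {i, j}) (t := Jᶜ) (n := 4)
    (by simp [Finset.insert_subset_iff, hi, hj]) (Finset.card_le_two.trans (by norm_num))
    (by rw [Finset.card_compl, Fintype.card_fin]; omega)
  obtain ⟨p, hpl, hpT⟩ := hl.exists_ofFn_sublist (fun x _ => hall x) hT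
  obtain ⟨B, hBl, hBp⟩ := hpl.exists_isRotated_flatten_ofFn_four
  have hB := hBl.perm.nodup_iff.mpr hl
  have hconst := coeff_eq_of_tight_blocks (by omega) hv.injective hd hB
    (fun x => hBl.perm.mem_iff.mpr (hall x)) hBp
    (fun k => Finset.mem_compl.mp (hTJ ((hpT _).mpr ⟨k, rfl⟩)))
    (by rw [List.formPerm_eq_of_isRotated hB hBl, ← htight]; simp [hx0σ])
  obtain ⟨k, rfl⟩ := (hpT i).mp (hijT (by simp))
  obtain ⟨k', rfl⟩ := (hpT j).mp (hijT (by simp))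
  rw [hconst k, hconst k']
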